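/- In the load-profile setup, the total energy satisfies the two-sided bound κ P_max W(L) + κ P_idle ImbTot(L) ≤ E(L) ≤ κ P_max W(L) + κ C_γ ImbTot(L), where C_γ = (1−γ)P_max + γ P_idle. -/
import Mathlib


open Finset

/-- Per-step maximum load `L*(k) = max_g L(k,g)`. -/
noncomputable def Lstar (K G : ℕ) [NeZero G] (L : Fin K → Fin G → ℝ) (k : Fin K) : ℝ :=
  Finset.univ.sup' ⟨0, Finset.mem_univ 0⟩ (L k)

/-- Utilization `u_g(k) = L(k,g) / L*(k)`. -/
noncomputable def uLoad (K G : ℕ) [NeZero G] (L : Fin K → Fin G → ℝ)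
    (k : Fin K) (g : Fin G) : ℝ :=
  L k g / Lstar K G L k

/-- Total energy
`E(L) = κ ∑_k L*(k) ∑_g (P_idle + (P_max − P_idle) u_g(k)^γ)` (real power `rpow`). -/
noncomputable def energy (K G : ℕ) [NeZero G] (κ Pidle Pmax γ : ℝ)
    (L : Fin K → Fin G → ℝ) : ℝ :=
  κ * ∑ k : Fin K, Lstar K G L k *
      ∑ g : Fin G, (Pidle + (Pmax - Pidle) * (uLoad K G L k g) ^ γ)

/-- Total workload `W(L) = ∑_k ∑_g L(k,g)`. -/
noncomputable def workTot (K G : ℕ) (L : Fin K → Fin G → ℝ) : ℝ :=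
  ∑ k : Fin K, ∑ g : Fin G, L k g

/-- Total imbalance `ImbTot(L) = ∑_k ∑_g (L*(k) − L(k,g))`. -/
noncomputable def imbTot (K G : ℕ) [NeZero G] (L : Fin K → Fin G → ℝ) : ℝ :=
  ∑ k : Fin K, ∑ g : Fin G, (Lstar K G L k - L k g)

lemma term_bounds (s a γ Pidle Pmax : ℝ) (hs : 0 < s) (ha : 0 ≤ a) (has : a ≤ s)
    (hPm : Pidle ≤ Pmax) (hγ0 : 0 < γ) (hγ1 : γ < 1) :
    Pmax * a + Pidle * (s - a) ≤ s * (Pidle + (Pmax - Pidle) * (a / s) ^ γ) ∧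
      s * (Pidle + (Pmax - Pidle) * (a / s) ^ γ) ≤
        Pmax * a + ((1 - γ) * Pmax + γ * Pidle) * (s - a) := by
  set u : ℝ := a / s with hu
  have hu0 : 0 ≤ u := div_nonneg ha hs.le
  have hu1 : u ≤ 1 := (div_le_one hs).mpr has
  have hus : u * s = a := div_mul_cancel₀ a hs.ne'
  have h1 : u ≤ u ^ γ := by
    rcases eq_or_lt_of_le hu0 with h | h
    · rw [← h, Real.zero_rpow hγ0.ne']
    · calc u = u ^ (1 : ℝ) := (Real.rpow_one u).symm
        _ ≤ u ^ γ := Real.rpow_le_rpow_of_exponent_ge h hu1 hγ1.le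
  have h2 : u ^ γ ≤ γ * u + (1 - γ) := by
    have := Real.geom_mean_le_arith_mean2_weighted (w₁ := γ) (w₂ := 1 - γ)
      (p₁ := u) (p₂ := 1) hγ0.le (by linarith) hu0 zero_le_one (by ring)
    simpa [Real.one_rpow] using this
  have hPd : 0 ≤ Pmax - Pidle := by linarith
  have hA : (Pmax - Pidle) * (s * u) ≤ (Pmax - Pidle) * (s * u ^ γ) :=
    mul_le_mul_of_nonneg_left (mul_le_mul_of_nonneg_left h1 hs.le) hPd
  have hB : (Pmax - Pidle) * (s * u ^ γ) ≤ (Pmax - Pidle) * (s * (γ * u + (1 - γ))) :=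
    mul_le_mul_of_nonneg_left (mul_le_mul_of_nonneg_left h2 hs.le) hPd
  have hA' : (Pmax - Pidle) * a ≤ (Pmax - Pidle) * (s * u ^ γ) := by
    calc (Pmax - Pidle) * a = (Pmax - Pidle) * (s * u) := by rw [mul_comm s u, hus]
      _ ≤ _ := hA
  have hB' : (Pmax - Pidle) * (s * u ^ γ) ≤ (Pmax - Pidle) * (γ * a + (1 - γ) * s) := by
    calc (Pmax - Pidle) * (s * u ^ γ) ≤ (Pmax - Pidle) * (s * (γ * u + (1 - γ))) := hB
      _ = (Pmax - Pidle) * (γ * (u * s) + (1 - γ) * s) := by ring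
      _ = _ := by rw [hus]
  constructor
  · nlinarith [hA']
  · nlinarith [hB']

/-- In the load-profile setup, the total energy satisfies the two-sided bound
`κ P_max W(L) + κ P_idle ImbTot(L) ≤ E(L) ≤ κ P_max W(L) + κ C_γ ImbTot(L)`,
where `C_γ = (1−γ)P_max + γ P_idle`. -/
theorem energy_sandwich (K G : ℕ) [NeZero K] [NeZero G]
    (L : Fin K → Fin G → ℝ) (hL : ∀ k g, 0 ≤ L k g)
    (hLstar : ∀ k, 0 < Lstar K G L k)
    (κ Pidle Pmax γ : ℝ) (hκ : 0 < κ) (hPi : 0 ≤ Pidle) (hPm : Pidle ≤ Pmax)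
    (hγ : γ ∈ Set.Ioo (0 : ℝ) 1) :
    κ * Pmax * workTot K G L + κ * Pidle * imbTot K G L ≤ energy K G κ Pidle Pmax γ L ∧
      energy K G κ Pidle Pmax γ L ≤
        κ * Pmax * workTot K G L + κ * ((1 - γ) * Pmax + γ * Pidle) * imbTot K G L := by
  obtain ⟨hγ0, hγ1⟩ := hγ
  have key : ∀ k g, (Pmax * L k g + Pidle * (Lstar K G L k - L k g) ≤
      Lstar K G L k * (Pidle + (Pmax - Pidle) * (uLoad K G L k g) ^ γ)) ∧
      Lstar K G L k * (Pidle + (Pmax - Pidle) * (uLoad K G L k g) ^ γ) ≤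
        Pmax * L k g + ((1 - γ) * Pmax + γ * Pidle) * (Lstar K G L k - L k g) := by
    intro k g
    have has : L k g ≤ Lstar K G L k :=
      Finset.le_sup' (L k) (Finset.mem_univ g)
    exact term_bounds _ _ _ _ _ (hLstar k) (hL k g) has hPm hγ0 hγ1
  have hsumlow : ∀ k, ∑ g : Fin G, (Pmax * L k g + Pidle * (Lstar K G L k - L k g)) ≤
      Lstar K G L k * ∑ g : Fin G, (Pidle + (Pmax - Pidle) * (uLoad K G L k g) ^ γ) := by
    intro k
    rw [Finset.mul_sum]
    exact Finset.sum_le_sum fun g _ => (key k g).1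
  have hsumhigh : ∀ k,
      Lstar K G L k * ∑ g : Fin G, (Pidle + (Pmax - Pidle) * (uLoad K G L k g) ^ γ) ≤
      ∑ g : Fin G, (Pmax * L k g + ((1 - γ) * Pmax + γ * Pidle) * (Lstar K G L k - L k g)) := by
    intro k
    rw [Finset.mul_sum]
    exact Finset.sum_le_sum fun g _ => (key k g).2
  have hlow := Finset.sum_le_sum fun k (_ : k ∈ Finset.univ) => hsumlow k
  have hhigh := Finset.sum_le_sum fun k (_ : k ∈ Finset.univ) => hsumhigh k
  constructor
  · have : κ * Pmax * workTot K G L + κ * Pidle * imbTot K G L =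
        κ * ∑ k : Fin K, ∑ g : Fin G, (Pmax * L k g + Pidle * (Lstar K G L k - L k g)) := by
      simp only [workTot, imbTot, Finset.mul_sum]
      rw [← Finset.sum_add_distrib]
      refine Finset.sum_congr rfl fun k _ => ?_
      rw [← Finset.sum_add_distrib]
      refine Finset.sum_congr rfl fun g _ => ?_
      ring
    rw [this, energy]
    exact mul_le_mul_of_nonneg_left hlow hκ.le
  · have : κ * Pmax * workTot K G L + κ * ((1 - γ) * Pmax + γ * Pidle) * imbTot K G L =
        κ * ∑ k : Fin K, ∑ g : Fin G,
          (Pmax * L k g + ((1 - γ) * Pmax + γ * Pidle) * (Lstar K G L k - L k g)) := by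
      simp only [workTot, imbTot, Finset.mul_sum]
      rw [← Finset.sum_add_distrib]
      refine Finset.sum_congr rfl fun k _ => ?_
      rw [← Finset.sum_add_distrib]
      refine Finset.sum_congr rfl fun g _ => ?_
      ring
    rw [this, energy]
    exact mul_le_mul_of_nonneg_left hhigh hκ.le
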